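/- arXiv:2108.09184 — 3 statements merged into one kernel-verified Lean document; each statement's English description precedes it below -/
import Mathlib

section
/- Let R be a commutative ring of characteristic 2 and let λ ∈ R with λ² = 1. Let A, B, C be λ-, λ-, and μ-circulant n×n matrices respectively (μ² = 1), and set X = [[A·C, B],[Bᵀ·C, Aᵀ]] (a 2n×2n block matrix). If C·Cᵀ = Iₙ, then X·Xᵀ = I_{2n} if and only if A·Aᵀ + B·Bᵀ = Iₙ. -/
open Matrix BigOperators

/-- The λ-circulant matrix generated by `a`. -/
def lamCirc {R : Type*} [CommRing R] (n : ℕ) [NeZero n] (lam : R) (a : ZMod n → R) :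
    Matrix (ZMod n) (ZMod n) R :=
  Matrix.of fun i j => if i.val ≤ j.val then a (j - i) else lam * a (j - i)

lemma zmod_carry {n : ℕ} [NeZero n] (x y : ZMod n) :
    x.val + (y - x).val = if x.val ≤ y.val then y.val else y.val + n := by
  split_ifs with h
  · rw [ZMod.val_sub h]; omega
  · push_neg at h
    have hx : x ≠ 0 := by
      intro h0; rw [h0] at h; simp at h
    have : NeZero x := ⟨hx⟩
    rw [sub_eq_add_neg, ZMod.val_add, ZMod.val_neg_of_ne_zero]
    have h1 := ZMod.val_lt x
    have h2 := ZMod.val_lt y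
    have h3 : (y.val + (n - x.val)) % n = y.val + (n - x.val) :=
      Nat.mod_eq_of_lt (by omega)
    omega

lemma lamCirc_mul_comm {R : Type*} [CommRing R] (n : ℕ) [NeZero n] (lam : R)
    (a b : ZMod n → R) :
    lamCirc n lam a * lamCirc n lam b = lamCirc n lam b * lamCirc n lam a := by
  ext i j
  rw [Matrix.mul_apply, Matrix.mul_apply]
  refine Fintype.sum_equiv (Equiv.subLeft (i + j)) _ _ fun k => ?_
  simp only [lamCirc, Matrix.of_apply, Equiv.subLeft_apply]
  have e1 : (i + j - k) - i = j - k := by ring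
  have e2 : j - (i + j - k) = k - i := by ring
  rw [e1, e2]
  have key : ∀ (p : Prop) [Decidable p] (z : R),
      (if p then z else lam * z) = lam ^ (if p then 0 else 1) * z := by
    intro p _ z; split_ifs <;> simp
  rw [key, key, key, key]
  have c1 := zmod_carry i k
  have c2 := zmod_carry k j
  have c3 := zmod_carry i (i + j - k)
  have c4 := zmod_carry (i + j - k) j
  rw [e1] at c3
  rw [e2] at c4
  have hn : 0 < n := Nat.pos_of_ne_zero (NeZero.ne n)
  have hexp : (if i.val ≤ k.val then 0 else 1) + (if k.val ≤ j.val then 0 else 1)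
      = (if i.val ≤ (i + j - k).val then 0 else 1)
        + (if (i + j - k).val ≤ j.val then 0 else 1) := by
    split_ifs at c1 c2 c3 c4 ⊢ <;> omega
  rw [mul_mul_mul_comm, ← pow_add, mul_mul_mul_comm, ← pow_add, hexp,
    mul_comm (b (j - k)) (a (k - i))]

lemma lamCirc_transpose {R : Type*} [CommRing R] (n : ℕ) [NeZero n] (lam : R)
    (hlam : lam ^ 2 = 1) (a : ZMod n → R) :
    (lamCirc n lam a)ᵀ = lamCirc n lam (fun k => if k = 0 then a 0 else lam * a (-k)) := by
  ext i j
  simp only [lamCirc, Matrix.transpose_apply, Matrix.of_apply]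
  by_cases hij : i = j
  · subst hij; simp
  · have h0 : j - i ≠ 0 := sub_ne_zero.mpr (Ne.symm hij)
    rw [if_neg h0]
    have hnn : -(j - i) = i - j := by ring
    rw [hnn]
    have hne : i.val ≠ j.val := fun h => hij (ZMod.val_injective n h)
    rcases lt_or_gt_of_ne hne with h | h
    · rw [if_neg (not_le.mpr h), if_pos h.le]
    · rw [if_pos h.le, if_neg (not_le.mpr h), ← mul_assoc, ← pow_two, hlam, one_mul]

theorem blockMatrix_orthogonal_iff {R : Type*} [CommRing R] [CharP R 2]
    (n : ℕ) [NeZero n] (lam mu : R) (hlam : lam ^ 2 = 1) (hmu : mu ^ 2 = 1)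
    (a b c : ZMod n → R) (A B C : Matrix (ZMod n) (ZMod n) R)
    (hA : A = lamCirc n lam a) (hB : B = lamCirc n lam b) (hC : C = lamCirc n mu c)
    (hCC : C * Cᵀ = 1) :
    Matrix.fromBlocks (A * C) B (Bᵀ * C) Aᵀ *
        (Matrix.fromBlocks (A * C) B (Bᵀ * C) Aᵀ)ᵀ = 1 ↔
      A * Aᵀ + B * Bᵀ = 1 := by
  have h2 : (2 : R) = 0 := by
    have := CharP.cast_eq_zero R 2; simpa using this
  have self_add : ∀ M : Matrix (ZMod n) (ZMod n) R, M + M = 0 := by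
    intro M; rw [← two_smul R, h2, zero_smul]
  have hAB : A * B = B * A := by
    rw [hA, hB]; exact lamCirc_mul_comm n lam a b
  have hAt : Aᵀ * A = A * Aᵀ := by
    rw [hA, lamCirc_transpose n lam hlam a]
    exact lamCirc_mul_comm n lam _ _
  have hBt : Bᵀ * B = B * Bᵀ := by
    rw [hB, lamCirc_transpose n lam hlam b]
    exact lamCirc_mul_comm n lam _ _
  have hX : Matrix.fromBlocks (A * C) B (Bᵀ * C) Aᵀ *
      (Matrix.fromBlocks (A * C) B (Bᵀ * C) Aᵀ)ᵀ =
      Matrix.fromBlocks (A * Aᵀ + B * Bᵀ) 0 0 (A * Aᵀ + B * Bᵀ) := by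
    rw [Matrix.fromBlocks_transpose, Matrix.fromBlocks_multiply, Matrix.transpose_mul,
      Matrix.transpose_mul, Matrix.transpose_transpose, Matrix.fromBlocks_inj]
    refine ⟨?_, ?_, ?_, ?_⟩
    · rw [Matrix.mul_assoc, ← Matrix.mul_assoc C, hCC, Matrix.one_mul]
    · rw [Matrix.mul_assoc, ← Matrix.mul_assoc C, hCC, Matrix.one_mul, hAB,
        Matrix.transpose_transpose, self_add]
    · rw [Matrix.mul_assoc, ← Matrix.mul_assoc C, hCC, Matrix.one_mul,
        ← Matrix.transpose_mul, hAB, Matrix.transpose_mul, self_add]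
    · rw [Matrix.mul_assoc, ← Matrix.mul_assoc C, hCC, Matrix.one_mul,
        Matrix.transpose_transpose, hAt, hBt, add_comm]
  rw [hX, ← Matrix.fromBlocks_one, Matrix.fromBlocks_inj]
  constructor
  · rintro ⟨h, -, -, -⟩; exact h
  · intro h; exact ⟨h, rfl, rfl, h⟩
end

section
/- Let C be a linear code over the ring F₂ + uF₂ (u² = 0) and φ the Gray map sending a + bu ↦ (b, a+b) componentwise. If C is self-orthogonal with respect to the Euclidean inner product, then φ(C) is a self-orthogonal binary linear code of twice the length. -/
open BigOperators

/-- The Gray map `φ : (F₂ + uF₂)ⁿ → F₂^{2n}`, `a + bu ↦ (b, a + b)` componentwise,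
where `F₂ + uF₂` is modelled as the dual numbers over `F₂` (`fst = a`, `snd = b`). -/
def grayMap (n : ℕ) (x : Fin n → DualNumber (ZMod 2)) : Fin n ⊕ Fin n → ZMod 2 :=
  Sum.elim (fun i => (x i).snd) (fun i => (x i).fst + (x i).snd)

/-! The Gray map is `F₂`-linear, so `φ(C)` is a binary linear code. In characteristic two,
`b b' + (a + b)(a' + b') = a a' + (a b' + b a')`, so `⟨φ x, φ y⟩` is the sum of the two
components of `∑ xᵢ yᵢ`, which vanishes when `C` is self-orthogonal. -/

theorem DualNumber.snd_mul_snd_add_mul_eq_fst_add_snd {R : Type*} [CommRing R] [CharP R 2]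
    (p q : DualNumber R) :
    p.snd * q.snd + (p.fst + p.snd) * (q.fst + q.snd) = (p * q).fst + (p * q).snd := by
  have hbb : p.snd * q.snd + p.snd * q.snd = 0 := CharTwo.add_self_eq_zero _
  simp only [TrivSqZeroExt.fst_mul, TrivSqZeroExt.snd_mul, smul_eq_mul, MulOpposite.smul_eq_mul_unop,
    MulOpposite.unop_op]
  linear_combination hbb

theorem grayMap_add (n : ℕ) (x y : Fin n → DualNumber (ZMod 2)) :
    grayMap n (x + y) = grayMap n x + grayMap n y := by
  funext j
  cases j <;> simp only [grayMap, Pi.add_apply, Sum.elim_inl, Sum.elim_inr,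
    TrivSqZeroExt.fst_add, TrivSqZeroExt.snd_add, add_add_add_comm]

theorem grayMap_smul (n : ℕ) (c : ZMod 2) (x : Fin n → DualNumber (ZMod 2)) :
    grayMap n (c • x) = c • grayMap n x := by
  funext j
  cases j <;> simp only [grayMap, Pi.smul_apply, Sum.elim_inl, Sum.elim_inr,
    TrivSqZeroExt.fst_smul, TrivSqZeroExt.snd_smul, smul_eq_mul, mul_add]

def grayLinearMap (n : ℕ) : (Fin n → DualNumber (ZMod 2)) →ₗ[ZMod 2] (Fin n ⊕ Fin n → ZMod 2) where
  toFun := grayMap n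
  map_add' := grayMap_add n
  map_smul' := grayMap_smul n

theorem grayMap_dotProduct (n : ℕ) (x y : Fin n → DualNumber (ZMod 2)) :
    ∑ j, grayMap n x j * grayMap n y j = (∑ i, x i * y i).fst + (∑ i, x i * y i).snd := by
  simp only [Fintype.sum_sum_type, grayMap, Sum.elim_inl, Sum.elim_inr, TrivSqZeroExt.fst_sum,
    TrivSqZeroExt.snd_sum, ← Finset.sum_add_distrib,
    DualNumber.snd_mul_snd_add_mul_eq_fst_add_snd]

theorem grayMap_self_orthogonal (n : ℕ)
    (C : Submodule (DualNumber (ZMod 2)) (Fin n → DualNumber (ZMod 2)))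
    (hC : ∀ x ∈ C, ∀ y ∈ C, ∑ i, x i * y i = 0) :
    (∃ D : Submodule (ZMod 2) (Fin n ⊕ Fin n → ZMod 2),
      (D : Set (Fin n ⊕ Fin n → ZMod 2)) = grayMap n '' C) ∧
    (∀ x ∈ C, ∀ y ∈ C, ∑ j, grayMap n x j * grayMap n y j = 0) := by
  refine ⟨⟨(C.restrictScalars (ZMod 2)).map (grayLinearMap n), ?_⟩, fun x hx y hy => ?_⟩
  · simp only [Submodule.map_coe, Submodule.coe_restrictScalars]
    rfl
  · rw [grayMap_dotProduct, hC x hx y hy, TrivSqZeroExt.fst_zero, TrivSqZeroExt.snd_zero, add_zero]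
end

section
/- Let G' be a generator matrix (rows r₁,…,rₙ) of a self-dual code C' of length 2n over a commutative Frobenius ring R. Let ε ∈ R with ε² = −1 and δ ∈ R^{2n} with ⟨δ,δ⟩ = −1, and set γᵢ = ⟨rᵢ, δ⟩. Then the (n+1)×(2n+2) matrix G whose first row is (1, 0, δ) and whose (i+1)-th row is (−γᵢ, ε·γᵢ, rᵢ) generates a self-orthogonal code, i.e. G·Gᵀ = 0. -/
open Matrix BigOperators

theorem building_up_self_orthogonal {R : Type*} [CommRing R]
    (n : ℕ) (C : Submodule R (Fin (2 * n) → R))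
    (hsd : ∀ x, x ∈ C ↔ ∀ y ∈ C, ∑ i, x i * y i = 0)
    (r : Fin n → (Fin (2 * n) → R)) (hr : Submodule.span R (Set.range r) = C)
    (ε : R) (hε : ε ^ 2 = -1)
    (δ : Fin (2 * n) → R) (hδ : ∑ i, δ i * δ i = -1)
    (γ : Fin n → R) (hγ : ∀ i, γ i = ∑ j, r i j * δ j)
    (G : Matrix (Unit ⊕ Fin n) (Unit ⊕ (Unit ⊕ Fin (2 * n))) R)
    (hG : G = Matrix.of (Sum.elim
      (fun _ => Sum.elim (fun _ => 1) (Sum.elim (fun _ => 0) δ))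
      (fun i => Sum.elim (fun _ => -γ i) (Sum.elim (fun _ => ε * γ i) (r i))))) :
    G * Gᵀ = 0 := by
  have hmem : ∀ i, r i ∈ C := by
    intro i
    rw [← hr]
    exact Submodule.subset_span ⟨i, rfl⟩
  have horth : ∀ i j, ∑ k, r i k * r j k = 0 := by
    intro i j
    exact (hsd (r i)).mp (hmem i) (r j) (hmem j)
  ext a b
  subst hG
  rcases a with a | i <;> rcases b with b | j
  · simp [Matrix.mul_apply, Fintype.sum_sum_type, hδ]
  · simp only [Matrix.mul_apply, Fintype.sum_sum_type, Matrix.transpose_apply,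
      Matrix.of_apply, Sum.elim_inl, Sum.elim_inr, Finset.univ_unique,
      Finset.sum_singleton, Matrix.zero_apply]
    rw [hγ]
    simp [mul_comm]
  · simp only [Matrix.mul_apply, Fintype.sum_sum_type, Matrix.transpose_apply,
      Matrix.of_apply, Sum.elim_inl, Sum.elim_inr, Finset.univ_unique,
      Finset.sum_singleton, Matrix.zero_apply]
    rw [hγ]
    simp
  · simp only [Matrix.mul_apply, Fintype.sum_sum_type, Matrix.transpose_apply,
      Matrix.of_apply, Sum.elim_inl, Sum.elim_inr, Finset.univ_unique,
      Finset.sum_singleton, Matrix.zero_apply]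
    linear_combination (γ i * γ j) * hε + horth i j
end
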